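/- arXiv:2307.12772 — 4 statements merged into one kernel-verified Lean document; each statement's English description precedes it below -/
import Mathlib

section
/- Let ω ∈ (0, π). Then 1/4 ≤ m(ω) ≤ 1/2. (Proposition 5.3, first part: bounds for the corner constant m.) -/
/-- `M θ x = cosh((π − θ)x) / (2(1 + cosh(πx)))`. -/
noncomputable def M (θ x : ℝ) : ℝ :=
  Real.cosh ((Real.pi - θ) * x) / (2 * (1 + Real.cosh (Real.pi * x)))

/-- `m θ = sup_{x ∈ ℝ} M θ x`. -/
noncomputable def m (θ : ℝ) : ℝ := ⨆ x : ℝ, M θ x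

open Real

lemma M_zero (θ : ℝ) : M θ 0 = 1 / 4 := by
  norm_num [M]

lemma M_le_half {θ : ℝ} (hθ : θ ∈ Set.Icc 0 (2 * π)) (x : ℝ) : M θ x ≤ 1 / 2 := by
  have hcosh : cosh ((π - θ) * x) ≤ cosh (π * x) := by
    rw [cosh_le_cosh, abs_mul, abs_mul, abs_of_pos pi_pos]
    gcongr
    exact abs_le.2 ⟨by linarith [hθ.2], by linarith [hθ.1]⟩
  have hpos : 0 < cosh (π * x) := cosh_pos _
  rw [M, div_le_iff₀ (by positivity)]
  linarith

lemma bddAbove_range_M {θ : ℝ} (hθ : θ ∈ Set.Icc 0 (2 * π)) : BddAbove (Set.range (M θ)) :=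
  ⟨1 / 2, Set.forall_mem_range.2 (M_le_half hθ)⟩

theorem stmt_0 (ω : ℝ) (hω : ω ∈ Set.Ioo 0 Real.pi) :
    1 / 4 ≤ m ω ∧ m ω ≤ 1 / 2 := by
  have hω' : ω ∈ Set.Icc 0 (2 * π) := ⟨hω.1.le, by linarith [hω.2, pi_pos]⟩
  exact ⟨M_zero ω ▸ le_ciSup (bddAbove_range_M hω') 0, ciSup_le (M_le_half hω')⟩
end

section
/- For every ω ∈ [π/2, π) the function M_ω is strictly decreasing on [0, ∞): if 0 ≤ x < y then M_ω(y) < M_ω(x). (Claim established in the proof of Proposition 5.3.) -/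
/-!
Since `1 + cosh (π x) = 2 cosh² (π x / 2)`, we have `4 M_ω(x) = cosh (a x) / cosh² (c x)` with
`a = π - ω` and `c = π / 2 ≥ |a|`. By the product-to-sum formula, `|a| ≤ c` and `0 ≤ x ≤ y` give
`cosh (a y) cosh (c x) ≤ cosh (a x) cosh (c y)`, i.e. `cosh (a ·) / cosh (c ·)` is antitone on
`[0, ∞)`; the remaining factor `1 / cosh (c ·)` is strictly antitone there.
-/

open Real Set

lemma cosh_mul_cosh (u v : ℝ) : cosh u * cosh v = (cosh (u + v) + cosh (u - v)) / 2 := by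
  rw [cosh_add, cosh_sub]
  ring

lemma cosh_mul_cosh_le_cosh_mul_cosh {a c x y : ℝ} (hac : |a| ≤ c) (hx : 0 ≤ x) (hxy : x ≤ y) :
    cosh (a * y) * cosh (c * x) ≤ cosh (a * x) * cosh (c * y) := by
  obtain ⟨hca, hac⟩ := abs_le.mp hac
  have hy : 0 ≤ y := hx.trans hxy
  have h_sum : |a * y + c * x| ≤ |a * x + c * y| := by
    rw [abs_le, abs_of_nonneg (by nlinarith)]
    constructor <;> nlinarith
  have h_diff : |a * y - c * x| ≤ |c * y - a * x| := by
    rw [abs_le, abs_of_nonneg (by nlinarith)]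
    constructor <;> nlinarith
  rw [cosh_mul_cosh, mul_comm (cosh (a * x)), cosh_mul_cosh]
  gcongr
  · exact cosh_le_cosh.mpr (by rwa [add_comm (c * y)])
  · exact cosh_le_cosh.mpr h_diff

lemma strictAntiOn_cosh_div_cosh_sq {a c : ℝ} (hac : |a| ≤ c) (hc : 0 < c) :
    StrictAntiOn (fun x => cosh (a * x) / cosh (c * x) ^ 2) (Ici 0) := by
  intro x (hx : 0 ≤ x) y _ hxy
  have h_le := cosh_mul_cosh_le_cosh_mul_cosh hac hx hxy.le
  have h_lt : cosh (c * x) < cosh (c * y) := by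
    rw [cosh_lt_cosh, abs_of_nonneg (by positivity), abs_of_nonneg (by nlinarith)]
    exact mul_lt_mul_of_pos_left hxy hc
  have hcx := cosh_pos (c * x)
  have hax := cosh_pos (a * x)
  rw [div_lt_div_iff₀ (by positivity) (by positivity)]
  calc cosh (a * y) * cosh (c * x) ^ 2
      = cosh (a * y) * cosh (c * x) * cosh (c * x) := by ring
    _ ≤ cosh (a * x) * cosh (c * y) * cosh (c * x) := by gcongr
    _ < cosh (a * x) * cosh (c * y) * cosh (c * y) := by gcongr
    _ = cosh (a * x) * cosh (c * y) ^ 2 := by ring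

lemma M_eq (θ x : ℝ) :
    M θ x = cosh ((π - θ) * x) / cosh (π / 2 * x) ^ 2 / 4 := by
  have h : 2 * (1 + cosh (π * x)) = cosh (π / 2 * x) ^ 2 * 4 := by
    rw [show π * x = 2 * (π / 2 * x) by ring, cosh_two_mul]
    linarith [cosh_sq (π / 2 * x)]
  rw [M, h, div_div]

theorem stmt_6 (ω : ℝ) (hω : ω ∈ Set.Ico (Real.pi / 2) Real.pi)
    (x y : ℝ) (hx : 0 ≤ x) (hxy : x < y) :
    M ω y < M ω x := by
  have hac : |π - ω| ≤ π / 2 := abs_le.mpr ⟨by linarith [hω.2, pi_pos], by linarith [hω.1]⟩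
  rw [M_eq, M_eq]
  gcongr ?_ / 4
  exact strictAntiOn_cosh_div_cosh_sq hac (by positivity) hx (hx.trans hxy.le) hxy
end

section
/- Let H be a complex Hilbert space, let Γ be a bounded self-adjoint operator on H, let c, ε ∈ ℝ with ε² ≠ c, and let K be a compact operator on H such that Γ∘Γ = c·1 + K. Then the kernel of ε·1 + Γ is finite-dimensional and the range of ε·1 + Γ is closed. (The Fredholmness mechanism underlying the proofs of Theorem 4.4 and Theorem 5.2: if Γ² is a real constant plus a compact operator, then ε·1 + Γ is Fredholm whenever ε² differs from that constant.) -/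
/-!
With `T = ε • 1 + Γ`, the hypothesis gives `(Γ - ε • 1) T = (c - ε²) • 1 + K`, so after scaling `T`
has a left inverse modulo a compact operator: `S T = 1 + K'`. Such a `T` is left semi-Fredholm.
On `ker T` the identity equals the compact operator `-K'`, so `ker T` is finite dimensional. On a
closed complement `M` of `ker T` (which exists by Hahn–Banach), `T` is bounded below: unit vectors
`uₙ ∈ M` with `T uₙ → 0` would, through `uₙ = S T uₙ - K' uₙ`, have a subsequence converging to a
unit vector of `M ∩ ker T = 0`. Hence `range T = T(M)` is closed.
-/

open Filter Topology

namespace ContinuousLinearMap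

section

variable {𝕜 E F : Type*} [NontriviallyNormedField 𝕜]
  [NormedAddCommGroup E] [NormedSpace 𝕜 E] [NormedAddCommGroup F] [NormedSpace 𝕜 F]
  {T : E →L[𝕜] F} {S : F →L[𝕜] E} {K : E →L[𝕜] E}

theorem apply_apply_eq_add_of_comp_eq_one_add (hST : S ∘L T = 1 + K) (x : E) :
    S (T x) = x + K x := by
  simpa using congr($hST x)

theorem finiteDimensional_ker_of_comp_eq_one_add [CompleteSpace 𝕜] (hK : IsCompactOperator K)
    (hST : S ∘L T = 1 + K) : FiniteDimensional 𝕜 (LinearMap.ker (T : E →ₗ[𝕜] F)) := by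
  set N := LinearMap.ker (T : E →ₗ[𝕜] F)
  have hKN : ∀ x ∈ N, -K x = x := fun x hx => by
    have := apply_apply_eq_add_of_comp_eq_one_add hST x
    rw [show T x = 0 from hx, map_zero, eq_comm, add_eq_zero_iff_neg_eq'] at this
    exact this
  have hNK : ∀ x : N, -K x ∈ N := fun x => by rw [hKN x x.2]; exact x.2
  refine FiniteDimensional.of_isCompactOperator_id ?_
  have hid : (id : N → N) = Set.codRestrict (fun x : N => -K x) N hNK :=
    funext fun x => Subtype.ext (hKN x x.2).symm
  rw [hid]
  exact (hK.neg.comp_clm N.subtypeL).codRestrict hNK T.isClosed_ker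

theorem exists_tendsto_subseq_of_comp_eq_one_add (hK : IsCompactOperator K)
    (hST : S ∘L T = 1 + K) {u : ℕ → E} {R : ℝ} (hu : ∀ n, ‖u n‖ ≤ R)
    (hTu : Tendsto (T ∘ u) atTop (𝓝 0)) :
    ∃ z, ∃ φ : ℕ → ℕ, StrictMono φ ∧ Tendsto (u ∘ φ) atTop (𝓝 z) := by
  obtain ⟨C, hC, hKC⟩ := hK.image_closedBall_subset_compact R
  obtain ⟨y, -, φ, hφ, hKu⟩ :=
    hC.tendsto_subseq (x := K ∘ u) fun n => hKC ⟨u n, by simpa using hu n, rfl⟩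
  have hSTu : Tendsto (S ∘ (T ∘ u) ∘ φ) atTop (𝓝 0) := by
    simpa using (S.continuous.tendsto 0).comp (hTu.comp hφ.tendsto_atTop)
  refine ⟨-y, φ, hφ, ?_⟩
  convert hSTu.sub hKu using 1
  · ext n
    simp [apply_apply_eq_add_of_comp_eq_one_add hST]
  · simp

end

section

variable {𝕜 E F : Type*} [RCLike 𝕜]
  [NormedAddCommGroup E] [NormedSpace 𝕜 E] [NormedAddCommGroup F] [NormedSpace 𝕜 F]
  {T : E →L[𝕜] F} {S : F →L[𝕜] E} {K : E →L[𝕜] E}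

theorem exists_antilipschitzWith_comp_subtypeL_of_comp_eq_one_add (hK : IsCompactOperator K)
    (hST : S ∘L T = 1 + K) {M : Submodule 𝕜 E} (hM : IsClosed (M : Set E))
    (hMT : Disjoint M (LinearMap.ker (T : E →ₗ[𝕜] F))) :
    ∃ C, AntilipschitzWith C (T ∘L M.subtypeL) := by
  rw [antilipschitzWith_iff_exists_mul_le_norm]
  by_contra! hsmall
  have hunit : ∀ n : ℕ, ∃ x ∈ M, ‖x‖ = 1 ∧ ‖T x‖ < 1 / (n + 1) := fun n => by
    obtain ⟨x, hx⟩ := hsmall (1 / (n + 1)) (by positivity)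
    have hx0 : x ≠ 0 := by rintro rfl; simp at hx
    refine ⟨(‖(x : E)‖⁻¹ : 𝕜) • x, M.smul_mem _ x.2, ?_, ?_⟩
    · simp [norm_smul, hx0]
    · rw [map_smul, norm_smul, norm_inv, RCLike.norm_ofReal, abs_norm,
        inv_mul_lt_iff₀ (norm_pos_iff.2 (by simpa using hx0)), mul_comm]
      exact hx
  choose u huM hu_norm hTu using hunit
  have hTu : Tendsto (T ∘ u) atTop (𝓝 0) :=
    squeeze_zero_norm (fun n => (hTu n).le) tendsto_one_div_add_atTop_nhds_zero_nat
  obtain ⟨z, φ, hφ, hz⟩ := exists_tendsto_subseq_of_comp_eq_one_add hK hST (R := 1)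
    (fun n => (hu_norm n).le) hTu
  have hzM : z ∈ M := hM.mem_of_tendsto hz (.of_forall fun n => huM (φ n))
  have hTz : T z = 0 :=
    tendsto_nhds_unique ((T.continuous.tendsto z).comp hz) (hTu.comp hφ.tendsto_atTop)
  have hz_norm : ‖z‖ = 1 := tendsto_nhds_unique hz.norm (by simp [hu_norm])
  have : z = 0 := Submodule.disjoint_def.1 hMT z hzM hTz
  simp [this] at hz_norm

theorem isClosed_range_of_comp_eq_one_add [CompleteSpace E] (hK : IsCompactOperator K)
    (hST : S ∘L T = 1 + K) : IsClosed (Set.range T) := by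
  have := finiteDimensional_ker_of_comp_eq_one_add hK hST
  obtain ⟨M, hM, hkerM⟩ := (Submodule.ClosedComplemented.of_finiteDimensional
    (LinearMap.ker (T : E →ₗ[𝕜] F))).exists_isClosed_isCompl
  obtain ⟨C, hC⟩ :=
    exists_antilipschitzWith_comp_subtypeL_of_comp_eq_one_add hK hST hM hkerM.disjoint.symm
  have : CompleteSpace M := hM.completeSpace_coe
  have hrange : Set.range T = Set.range (T ∘L M.subtypeL) := by
    refine subset_antisymm ?_ fun _ ⟨x, hx⟩ => ⟨x, hx⟩
    rintro _ ⟨x, rfl⟩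
    have hx : x ∈ LinearMap.ker (T : E →ₗ[𝕜] F) ⊔ M := hkerM.sup_eq_top ▸ Submodule.mem_top
    obtain ⟨y, hy, z, hz, rfl⟩ := Submodule.mem_sup.1 hx
    exact ⟨⟨z, hz⟩, by simp [show T y = 0 from hy]⟩
  rw [hrange]
  exact hC.isClosed_range (T ∘L M.subtypeL).uniformContinuous

end

end ContinuousLinearMap

theorem stmt_14_general {H : Type*} [NormedAddCommGroup H] [InnerProductSpace ℂ H] [CompleteSpace H]
    (Γ K : H →L[ℂ] H) (hK : IsCompactOperator K)
    (c ε : ℝ) (hc : ε ^ 2 ≠ c)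
    (hsq : Γ ∘L Γ = (c : ℂ) • (1 : H →L[ℂ] H) + K) :
    FiniteDimensional ℂ (LinearMap.ker (((ε : ℂ) • (1 : H →L[ℂ] H) + Γ : H →L[ℂ] H) : H →ₗ[ℂ] H)) ∧
      IsClosed (Set.range ((ε : ℂ) • (1 : H →L[ℂ] H) + Γ : H →L[ℂ] H)) := by
  set μ : ℂ := c - ε ^ 2
  have hμ : μ ≠ 0 := sub_ne_zero.2 (mod_cast hc.symm)
  have hfactor : (Γ - (ε : ℂ) • 1) ∘L ((ε : ℂ) • 1 + Γ) = μ • 1 + K := by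
    ext x
    have hΓΓ : Γ (Γ x) = (c : ℂ) • x + K x := by simpa using congr($hsq x)
    simp only [ContinuousLinearMap.comp_apply, smul_apply, sub_apply, add_apply,
      one_apply_eq_self, map_add, map_smul, hΓΓ, μ]
    module
  have hST : (μ⁻¹ • (Γ - (ε : ℂ) • 1)) ∘L ((ε : ℂ) • 1 + Γ) = 1 + μ⁻¹ • K := by
    rw [ContinuousLinearMap.smul_comp, hfactor, smul_add, smul_smul, inv_mul_cancel₀ hμ, one_smul]
  have hK' : IsCompactOperator (μ⁻¹ • K) := hK.smul μ⁻¹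
  exact ⟨ContinuousLinearMap.finiteDimensional_ker_of_comp_eq_one_add hK' hST,
    ContinuousLinearMap.isClosed_range_of_comp_eq_one_add hK' hST⟩

theorem stmt_14 {H : Type*} [NormedAddCommGroup H] [InnerProductSpace ℂ H] [CompleteSpace H]
    (Γ K : H →L[ℂ] H) (hΓ : IsSelfAdjoint Γ) (hK : IsCompactOperator K)
    (c ε : ℝ) (hc : ε ^ 2 ≠ c)
    (hsq : Γ ∘L Γ = (c : ℂ) • (1 : H →L[ℂ] H) + K) :
    FiniteDimensional ℂ (LinearMap.ker (((ε : ℂ) • (1 : H →L[ℂ] H) + Γ : H →L[ℂ] H) : H →ₗ[ℂ] H)) ∧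
      IsClosed (Set.range ((ε : ℂ) • (1 : H →L[ℂ] H) + Γ : H →L[ℂ] H)) :=
  stmt_14_general Γ K hK c ε hc hsq
end

section
/- Let θ ∈ (0, 2π) and let ε, μ ∈ ℝ with ε² − μ² > 0. Then (1 − (ε² − μ²)·M_θ(2η))² ≠ 0 for all η ∈ ℝ if and only if ε² − μ² < 1/m(θ). (The corner criterion established in the proof of Theorem 5.2: the corner determinant Δ_a(ξ) = (1 − (ε² − μ²)·M_θ(2η))² at a corner of interior angle θ is nonvanishing for all ξ = η + i/2 exactly when ε² − μ² < 1/m(θ).) -/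
/-!
`M θ` is continuous, positive and, for `θ ∈ (0, 2π)`, decays like `exp (-(π - |π - θ|) |x|)`.
Hence it attains its supremum `m θ`, and by the intermediate value theorem its range is exactly
`(0, m θ]`. With `c = ε² - μ² > 0`, the square `(1 - c M θ (2η))²` vanishes for some `η` iff
`1 / c` lies in that range, i.e. iff `1 / c ≤ m θ`.
-/

open Set Filter Topology Real

section ExtremeValue

variable {X : Type*} [TopologicalSpace X] [PreconnectedSpace X] [NoncompactSpace X] {f : X → ℝ}

theorem Continuous.range_eq_Ioc_iSup_of_tendsto_zero (hf : Continuous f) (hpos : ∀ x, 0 < f x)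
    (hlim : Tendsto f (cocompact X) (𝓝 0)) : range f = Ioc 0 (⨆ x, f x) := by
  obtain ⟨a⟩ := (cocompact X).nonempty_of_neBot
  have : Nonempty X := ⟨a⟩
  obtain ⟨x₀, hx₀⟩ :=
    hf.exists_forall_ge' a ((hlim.eventually_lt_const (hpos a)).mono fun _ => le_of_lt)
  have hsup : (⨆ x, f x) = f x₀ :=
    le_antisymm (ciSup_le hx₀) (le_ciSup ⟨f x₀, forall_mem_range.2 hx₀⟩ x₀)
  rw [hsup]
  refine Subset.antisymm (range_subset_iff.2 fun x => ⟨hpos x, hx₀ x⟩) fun t ht => ?_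
  obtain ⟨z, hz⟩ := (hlim.eventually_lt_const ht.1).exists
  exact (isPreconnected_range hf).Icc_subset (mem_range_self z) (mem_range_self x₀) ⟨hz.le, ht.2⟩

end ExtremeValue

namespace Real

theorem cosh_le_exp_abs (x : ℝ) : cosh x ≤ exp |x| := by
  rw [← cosh_abs, cosh_eq]
  have : exp (-|x|) ≤ exp |x| := exp_le_exp.2 (by linarith [abs_nonneg x])
  linarith

theorem exp_abs_le_two_mul_cosh (x : ℝ) : exp |x| ≤ 2 * cosh x := by
  rw [← cosh_abs, cosh_eq]
  linarith [exp_pos (-|x|)]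

end Real

theorem M_pos (θ x : ℝ) : 0 < M θ x := by
  unfold M; positivity

theorem continuous_M (θ : ℝ) : Continuous (M θ) := by
  unfold M
  refine Continuous.div (by fun_prop) (by fun_prop) fun x => ?_
  positivity

theorem M_le_exp (θ x : ℝ) : M θ x ≤ exp ((|π - θ| - π) * |x|) := by
  have hnum : cosh ((π - θ) * x) ≤ exp (|π - θ| * |x|) := by
    simpa only [abs_mul] using cosh_le_exp_abs ((π - θ) * x)
  have hden : exp (π * |x|) ≤ 2 * (1 + cosh (π * x)) := by
    have := exp_abs_le_two_mul_cosh (π * x)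
    rw [abs_mul, abs_of_pos pi_pos] at this
    linarith
  calc M θ x ≤ exp (|π - θ| * |x|) / exp (π * |x|) := by
        unfold M; gcongr
    _ = exp ((|π - θ| - π) * |x|) := by rw [← exp_sub]; ring_nf

theorem tendsto_M_cocompact {θ : ℝ} (hθ : θ ∈ Ioo 0 (2 * π)) :
    Tendsto (M θ) (cocompact ℝ) (𝓝 0) := by
  have hrate : |π - θ| - π < 0 := by
    rw [sub_neg, abs_lt]; constructor <;> linarith [hθ.1, hθ.2]
  have hexp : Tendsto (fun x : ℝ => exp ((|π - θ| - π) * |x|)) (cocompact ℝ) (𝓝 0) :=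
    tendsto_exp_atBot.comp (tendsto_id.const_mul_atTop_of_neg hrate |>.comp
      (tendsto_norm_cocompact_atTop (E := ℝ)))
  exact squeeze_zero (fun x => (M_pos θ x).le) (M_le_exp θ) hexp

theorem range_M {θ : ℝ} (hθ : θ ∈ Ioo 0 (2 * π)) : range (M θ) = Ioc 0 (m θ) :=
  (continuous_M θ).range_eq_Ioc_iSup_of_tendsto_zero (M_pos θ) (tendsto_M_cocompact hθ)

theorem stmt_17 (θ : ℝ) (hθ : θ ∈ Set.Ioo 0 (2 * Real.pi)) (ε μ : ℝ)
    (h : 0 < ε ^ 2 - μ ^ 2) :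
    (∀ η : ℝ, (1 - (ε ^ 2 - μ ^ 2) * M θ (2 * η)) ^ 2 ≠ 0) ↔
      ε ^ 2 - μ ^ 2 < 1 / m θ := by
  set c := ε ^ 2 - μ ^ 2
  have hm : 0 < m θ := nonempty_Ioc.1 (range_M hθ ▸ range_nonempty (M θ))
  have hroot (y : ℝ) : (1 - c * y) ^ 2 ≠ 0 ↔ y ≠ 1 / c := by
    rw [pow_ne_zero_iff two_ne_zero, sub_ne_zero, ne_comm, Ne, Ne, eq_div_iff h.ne', mul_comm]
  calc (∀ η, (1 - c * M θ (2 * η)) ^ 2 ≠ 0) ↔ ∀ x, M θ x ≠ 1 / c := by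
        simp only [hroot]
        exact ((mul_left_surjective₀ (two_ne_zero' ℝ)).forall (p := (M θ · ≠ 1 / c))).symm
    _ ↔ 1 / c ∉ Ioc 0 (m θ) := by rw [← range_M hθ, mem_range, not_exists]
    _ ↔ m θ < 1 / c := by simp [h]
    _ ↔ c < 1 / m θ := lt_one_div hm h
end
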